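/- arXiv:1508.06782 — 2 statements merged into one kernel-verified Lean document; each statement's English description precedes it below -/
import Mathlib

section
/- Let n, j, k be positive integers with k ≥ j, let α > 0 be a constant, and let c be a real number with n/j − c ≥ √(k n log n) and c ≥ 0. Set ψ = 1/j − (c + α√(n/k))/n. Then for all sufficiently large n there exists a constant α₁ > 0 (depending only on α) such that n/j − c(1 − ψ/2) ≥ (n/j − c)·(1 + α₁ c/(2n)). -/
/-! Writing `D = n/j - c` and `ψ = 1/j - (c + e)/n`, the choice `α₁ = 1/2` turns the claim into
the identity `n/j - c(1 - ψ/2) - D(1 + c/(4n)) = c(D - 2e)/(4n)`, so it suffices that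
`2e ≤ D` for `e = α√(n/k)`. Since `D ≥ √(k n log n)`, this follows from
`4α² n/k ≤ k n log n`, which holds as soon as `log n ≥ 4α²`. -/

open Real

theorem two_mul_mul_sqrt_div_le_sqrt_mul_log {α n k : ℝ} (hn : 0 ≤ n) (hk : 1 ≤ k)
    (hlog : 4 * α ^ 2 ≤ log n) : 2 * α * √(n / k) ≤ √(k * n * log n) := by
  have hnk : n / k ≤ n := div_le_self hn hk
  calc 2 * α * √(n / k) ≤ |2 * α| * √(n / k) := by gcongr; exact le_abs_self _
    _ = √(4 * α ^ 2 * (n / k)) := by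
      rw [sqrt_mul (by positivity), ← sqrt_sq_eq_abs]; ring_nf
    _ ≤ √(k * n * log n) := by
      have hlog0 : 0 ≤ log n := (by positivity : (0 : ℝ) ≤ 4 * α ^ 2).trans hlog
      refine sqrt_le_sqrt ?_
      calc 4 * α ^ 2 * (n / k) ≤ log n * n := by gcongr
        _ = 1 * (n * log n) := by ring
        _ ≤ k * (n * log n) := by gcongr
        _ = k * n * log n := by ring

theorem sub_mul_le_sub_mul_one_sub_half {n j c e : ℝ} (hn : 0 < n) (hj : j ≠ 0) (hc : 0 ≤ c)
    (he : 2 * e ≤ n / j - c) :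
    (n / j - c) * (1 + 1 / 2 * c / (2 * n)) ≤ n / j - c * (1 - (1 / j - (c + e) / n) / 2) := by
  have hgap : n / j - c * (1 - (1 / j - (c + e) / n) / 2) - (n / j - c) * (1 + 1 / 2 * c / (2 * n))
      = c * (n / j - c - 2 * e) / (4 * n) := by
    field_simp
    ring
  have : 0 ≤ c * (n / j - c - 2 * e) / (4 * n) := by
    exact div_nonneg (mul_nonneg hc (by linarith)) (by positivity)
  linarith

theorem stmt11_general (α : ℝ) :
    ∃ α₁ : ℝ, 0 < α₁ ∧ ∃ N : ℕ, ∀ n : ℕ, N ≤ n →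
    ∀ j k : ℕ, 0 < j → j ≤ k →
    ∀ c : ℝ, 0 ≤ c →
      Real.sqrt ((k : ℝ) * n * Real.log n) ≤ (n : ℝ) / (j : ℝ) - c →
      (n : ℝ) / (j : ℝ) - c * (1 - (1 / (j : ℝ) -
          (c + α * Real.sqrt ((n : ℝ) / (k : ℝ))) / (n : ℝ)) / 2) ≥
        ((n : ℝ) / (j : ℝ) - c) * (1 + α₁ * c / (2 * n)) := by
  refine ⟨1 / 2, one_half_pos, ⌈exp (4 * α ^ 2)⌉₊, fun n hN j k hj hjk c hc hD => ?_⟩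
  have hexp : exp (4 * α ^ 2) ≤ n := Nat.ceil_le.mp hN
  have hn : (0 : ℝ) < n := (exp_pos _).trans_le hexp
  have hlog : 4 * α ^ 2 ≤ log n := (le_log_iff_exp_le hn).mpr hexp
  have hk : (1 : ℝ) ≤ k := by exact_mod_cast hj.trans_le hjk
  refine sub_mul_le_sub_mul_one_sub_half hn (by positivity) hc ?_
  rw [← mul_assoc]
  exact (two_mul_mul_sqrt_div_le_sqrt_mul_log hn.le hk hlog).trans hD

/-- (Deterministic recurrence `eq:dying_whp`.) With
`ψ = 1/j - (c + α√(n/k))/n`, if `n/j - c ≥ √(k n log n)` and `c ≥ 0`, then for all sufficiently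
large `n` there is a constant `α₁ > 0` (depending only on `α`) such that
`n/j - c(1 - ψ/2) ≥ (n/j - c)(1 + α₁ c/(2n))`. -/
theorem stmt11 (α : ℝ) (hα : 0 < α) :
    ∃ α₁ : ℝ, 0 < α₁ ∧ ∃ N : ℕ, ∀ n : ℕ, N ≤ n →
    ∀ j k : ℕ, 0 < j → j ≤ k →
    ∀ c : ℝ, 0 ≤ c →
      Real.sqrt ((k : ℝ) * n * Real.log n) ≤ (n : ℝ) / (j : ℝ) - c →
      (n : ℝ) / (j : ℝ) - c * (1 - (1 / (j : ℝ) -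
          (c + α * Real.sqrt ((n : ℝ) / (k : ℝ))) / (n : ℝ)) / 2) ≥
        ((n : ℝ) / (j : ℝ) - c) * (1 + α₁ * c / (2 * n)) :=
  stmt11_general α
end

section
/- Let k ≤ n^α for a constant α < 1, and let c̃ be a configuration with Σ_{i∉𝒞} c̃_i ≤ γ√n/(k^{3/2} log n). Then for all sufficiently large n, for every opinion i with c̃_i ≤ γ√n/(k^{3/2} log n) (i.e., every small opinion), the expected count after one round of 3-majority dynamics satisfies E[C_i^{(t+1)} | c̃] ≤ c̃_i (1 − 1/(2k)); moreover the expected total support of non-valid opinions satisfies E[ Σ_{i∉𝒞} C_i^{(t+1)} | c̃ ] ≤ (γ√n/(k^{3/2} log n))·(1 − 1/(2k)). -/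
open MeasureTheory Finset
open scoped ENNReal NNReal

/-- Probability vector of one round of the 3-majority dynamics. -/
noncomputable def pvec {V : Type*} [Fintype V] (n : ℕ) (c : V → ℕ) (i : V) : ℝ :=
  ((c i : ℝ) / n) * (1 + (c i : ℝ) / n - ∑ j, ((c j : ℝ) / n) ^ 2)

/-- Multinomial probability mass function with `n` trials and probabilities `p`. -/
noncomputable def multinomialProb {V : Type*} [Fintype V] (n : ℕ) (p : V → ℝ)
    (c' : V → ℕ) : ℝ :=
  if ∑ i, c' i = n then
    ((n.factorial : ℝ) / ∏ i, ((c' i).factorial : ℝ)) * ∏ i, p i ^ c' i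
  else 0

/-- The smallness threshold `γ √n / (k^{3/2} log n)`. -/
noncomputable def smallThr (γ : ℝ) (n k : ℕ) : ℝ :=
  γ * Real.sqrt n / ((k : ℝ) ^ ((3 : ℝ) / 2) * Real.log n)

open scoped Classical in
/-- The set of big opinions of a configuration. -/
noncomputable def bigSet {V : Type*} [Fintype V] (γ : ℝ) (n k : ℕ) (c : V → ℕ) : Finset V :=
  Finset.univ.filter fun i => smallThr γ n k < (c i : ℝ)

open scoped Classical in
/-- The set of small opinions of a configuration. -/
noncomputable def smallSet {V : Type*} [Fintype V] (γ : ℝ) (n k : ℕ) (c : V → ℕ) : Finset V :=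
  Finset.univ.filter fun i => (c i : ℝ) ≤ smallThr γ n k

/-- The minimum count among big opinions of a configuration. -/
noncomputable def minBig {V : Type*} [Fintype V] (γ : ℝ) (n k : ℕ) (c : V → ℕ) : ℕ :=
  sInf (c '' (bigSet γ n k c : Set V))

/-- The 3-majority process with an `F`-dynamic adversary: `C t` is the configuration produced
by the dynamics at round `t`, `Ct t` the configuration after the adversary's action at round `t`;
conditionally on any history, `C (t+1)` is multinomial with probabilities `pvec n (Ct t)`. -/
structure AdvProcess (V : Type*) [Fintype V] (n F : ℕ)
    {Ω : Type*} [MeasurableSpace Ω] (P : Measure Ω) where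
  C : ℕ → Ω → V → ℕ
  Ct : ℕ → Ω → V → ℕ
  conf : ∀ t, ∀ᵐ ω ∂P, ∑ i, C t ω i = n
  conf' : ∀ t, ∀ᵐ ω ∂P, ∑ i, Ct t ω i = n
  adv : ∀ t, ∀ᵐ ω ∂P, ∑ i, ((Ct t ω i : ℤ) - (C t ω i : ℤ)).natAbs ≤ 2 * F
  step : ∀ (t : ℕ) (h : ℕ → (V → ℕ) × (V → ℕ)) (c' : V → ℕ),
    P ({ω | C (t + 1) ω = c'} ∩ {ω | ∀ s ≤ t, C s ω = (h s).1 ∧ Ct s ω = (h s).2}) =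
      ENNReal.ofReal (multinomialProb n (pvec n (h t).2) c') *
        P {ω | ∀ s ≤ t, C s ω = (h s).1 ∧ Ct s ω = (h s).2}

/-!
Given `c̃`, each `C'_i` is binomial with mean `n p_i = c̃_i (1 + c̃_i/n - ∑ c̃_j²/n²)`. The valid
opinions carry mass at least `n - θ` (`θ` the smallness threshold), so by Cauchy–Schwarz
`∑ c̃_j² ≥ (n - θ)²/k`; once `log n ≥ 4γ` we have `θ ≤ √n/(4k)`, and then the bracket is at most
`1 - 1/(2k)` whenever `c̃_i ≤ θ`. Summing over the non-valid opinions gives the second bound.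

The events `{C' = c'}` are not assumed measurable, but since their outer measures sum to `1`
each of them is null-measurable, which is enough to compute the expectations.
-/

section Multinomial

variable {V : Type*} [Fintype V]

theorem multinomialProb_nonneg {p : V → ℝ} (hp : ∀ i, 0 ≤ p i) (n : ℕ) (c : V → ℕ) :
    0 ≤ multinomialProb n p c := by
  unfold multinomialProb
  split_ifs
  · exact mul_nonneg (div_nonneg (Nat.cast_nonneg _) (prod_nonneg fun _ _ => Nat.cast_nonneg _))
      (prod_nonneg fun i _ => pow_nonneg (hp i) _)
  · exact le_rfl

theorem multinomialProb_eq_multinomial_mul_prod {n : ℕ} {c : V → ℕ} (hc : ∑ i, c i = n)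
    (p : V → ℝ) :
    multinomialProb n p c = Nat.multinomial univ c * ∏ i, p i ^ c i := by
  rw [multinomialProb, if_pos hc, Nat.multinomial, ← hc,
    Nat.cast_div (Nat.prod_factorial_dvd_factorial_sum _ _) (by positivity)]
  push_cast
  rfl

variable [DecidableEq V]

theorem sum_multinomialProb {p : V → ℝ} (hp : ∑ i, p i = 1) (n : ℕ) :
    ∑ c ∈ piAntidiag univ n, multinomialProb n p c = 1 := by
  rw [sum_congr rfl fun c hc => multinomialProb_eq_multinomial_mul_prod (mem_piAntidiag.1 hc).1 p,
    ← Finset.sum_pow_eq_sum_piAntidiag, hp, one_pow]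

theorem prod_add_single_one {M : Type*} [CommMonoid M] (g : V → ℕ → M) (d : V → ℕ) (i : V) :
    ∏ j, g j ((d + Pi.single i 1 : V → ℕ) j) = g i (d i + 1) * ∏ j ∈ {i}ᶜ, g j (d j) := by
  rw [Fintype.prod_eq_mul_prod_compl i]
  congr 1
  · simp
  · exact prod_congr rfl fun j hj => by
      rw [Pi.add_apply, Pi.single_eq_of_ne (by simpa using hj), add_zero]

theorem succ_mul_multinomialProb_add_single {m : ℕ} {d : V → ℕ} (hd : ∑ j, d j = m)
    (p : V → ℝ) (i : V) :
    ((d i : ℝ) + 1) * multinomialProb (m + 1) p (d + Pi.single i 1) =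
      (m + 1) * p i * multinomialProb m p d := by
  have hsum : ∑ j, (d + Pi.single i 1 : V → ℕ) j = m + 1 := by
    simp [Finset.sum_add_distrib, hd]
  rw [multinomialProb, multinomialProb, if_pos hsum, if_pos hd,
    prod_add_single_one (fun _ a => (a.factorial : ℝ)), prod_add_single_one (fun j a => p j ^ a),
    Fintype.prod_eq_mul_prod_compl i (fun j => ((d j).factorial : ℝ)),
    Fintype.prod_eq_mul_prod_compl i (fun j => p j ^ d j)]
  push_cast [Nat.factorial_succ, pow_succ]
  field_simp

theorem sum_add_single_one (d : V → ℕ) (i : V) :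
    ∑ j, (d + Pi.single i 1 : V → ℕ) j = ∑ j, d j + 1 := by
  simp [Finset.sum_add_distrib]

theorem sum_coord_mul_multinomialProb {p : V → ℝ} (hp : ∑ i, p i = 1) (n : ℕ) (i : V) :
    ∑ c ∈ piAntidiag univ n, (c i : ℝ) * multinomialProb n p c = n * p i := by
  cases n with
  | zero => simp
  | succ m =>
    symm
    calc ((m + 1 : ℕ) : ℝ) * p i
        = ∑ d ∈ piAntidiag univ m, (m + 1) * p i * multinomialProb m p d := by
          rw [← mul_sum, sum_multinomialProb hp, mul_one, Nat.cast_succ]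
      _ = ∑ d ∈ piAntidiag univ m,
            (((d + Pi.single i 1 : V → ℕ) i : ℕ) : ℝ) *
              multinomialProb (m + 1) p (d + Pi.single i 1) :=
          sum_congr rfl fun d hd => by
            simpa using (succ_mul_multinomialProb_add_single (mem_piAntidiag.1 hd).1 p i).symm
      _ = ∑ c ∈ piAntidiag univ (m + 1), (c i : ℝ) * multinomialProb (m + 1) p c := by
          refine sum_bij_ne_zero (fun d _ _ => d + Pi.single i 1) (fun d hd _ => ?_)
            (fun _ _ _ _ _ _ h => add_right_cancel h) (fun c hc hne => ?_) (fun _ _ _ => rfl)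
          · exact mem_piAntidiag.2
              ⟨by rw [sum_add_single_one, (mem_piAntidiag.1 hd).1], fun j _ => mem_univ j⟩
          · have hci : c i ≠ 0 := by rintro h; simp [h] at hne
            have hc' : c - Pi.single i 1 + Pi.single i 1 = c := by
              funext j
              rcases eq_or_ne j i with rfl | hj
              · simp; omega
              · simp [hj]
            refine ⟨c - Pi.single i 1, ?_, ?_, hc'⟩
            · have := (mem_piAntidiag.1 hc).1
              rw [← hc', sum_add_single_one] at this
              simpa using this
            · rw [hc']; exact hne

end Multinomial

section FiniteLaw

variable {Ω α : Type*} [MeasurableSpace Ω] {μ : Measure Ω}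

theorem nullMeasurableSet_of_measure_add_measure_compl_le [IsFiniteMeasure μ] {s : Set Ω}
    (h : μ s + μ sᶜ ≤ μ Set.univ) : NullMeasurableSet s μ := by
  set t := toMeasurable μ s
  set t' := toMeasurable μ sᶜ
  have hcover : t ∪ t' = Set.univ := Set.eq_univ_of_forall fun ω =>
    (em (ω ∈ s)).imp (subset_toMeasurable μ s ·) (subset_toMeasurable μ sᶜ ·)
  have hoverlap : μ (t ∩ t') = 0 := by
    have := measure_union_add_inter (μ := μ) t (measurableSet_toMeasurable μ sᶜ)
    rw [hcover, measure_toMeasurable, measure_toMeasurable] at this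
    exact nonpos_iff_eq_zero.1 <| ENNReal.le_of_add_le_add_left (measure_ne_top μ Set.univ)
      (by rw [add_zero, this]; exact h)
  refine (measurableSet_toMeasurable μ s).nullMeasurableSet.congr ?_
  rw [ae_eq_set]
  constructor
  · exact measure_mono_null (t := t ∩ t') (fun ω hω => ⟨hω.1, subset_toMeasurable μ sᶜ hω.2⟩)
      hoverlap
  · simp [Set.sdiff_eq_empty.2 (subset_toMeasurable μ s)]

variable [IsProbabilityMeasure μ] {X : Ω → α} {S : Finset α} {w : α → ℝ}

theorem integral_comp_eq_sum_of_measure_fiber [Countable α] (hw0 : ∀ a, 0 ≤ w a)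
    (hwS : ∀ a ∉ S, w a = 0) (hw1 : ∑ a ∈ S, w a = 1)
    (hX : ∀ a, μ {ω | X ω = a} = ENNReal.ofReal (w a)) (f : α → ℝ) :
    ∫ ω, f (X ω) ∂μ = ∑ a ∈ S, f a * w a := by
  classical
  have hmemS : ∀ᵐ ω ∂μ, X ω ∈ S := by
    have hcover : {ω | ¬X ω ∈ S} ⊆ ⋃ a ∈ (S : Set α)ᶜ, {ω | X ω = a} :=
      fun ω hω => Set.mem_biUnion hω rfl
    refine ae_iff.2 (measure_mono_null hcover
      ((measure_biUnion_null_iff (Set.to_countable _)).2 fun a ha => ?_))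
    rw [hX, hwS a ha, ENNReal.ofReal_zero]
  have htotal : ∑ a ∈ S, μ {ω | X ω = a} = 1 := by
    simp_rw [hX]
    rw [← ENNReal.ofReal_sum_of_nonneg fun a _ => hw0 a, hw1, ENNReal.ofReal_one]
  have hfiber : ∀ a ∈ S, NullMeasurableSet {ω | X ω = a} μ := by
    intro a ha
    refine nullMeasurableSet_of_measure_add_measure_compl_le ?_
    have hcompl : μ {ω | X ω = a}ᶜ ≤ ∑ b ∈ S.erase a, μ {ω | X ω = b} :=
      (measure_mono_ae (t := ⋃ b ∈ S.erase a, {ω | X ω = b}) (hmemS.mono fun ω hω hne =>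
        Set.mem_biUnion (Finset.mem_erase.2 ⟨hne, hω⟩) rfl)).trans
        (measure_biUnion_finset_le _ _)
    calc μ {ω | X ω = a} + μ {ω | X ω = a}ᶜ
        ≤ μ {ω | X ω = a} + ∑ b ∈ S.erase a, μ {ω | X ω = b} := by gcongr
      _ = μ Set.univ := by rw [add_sum_erase S (fun b => μ {ω | X ω = b}) ha, htotal, measure_univ]
  calc ∫ ω, f (X ω) ∂μ
      = ∫ ω, ∑ a ∈ S, {ω | X ω = a}.indicator (fun _ => f a) ω ∂μ := by
        refine integral_congr_ae (hmemS.mono fun ω hω => ?_)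
        show f (X ω) = ∑ a ∈ S, {ω | X ω = a}.indicator (fun _ => f a) ω
        rw [sum_eq_single_of_mem (f := fun a => {ω | X ω = a}.indicator (fun _ => f a) ω) (X ω) hω
            fun b _ hb => Set.indicator_of_notMem (Ne.symm hb) _,
          Set.indicator_of_mem (show ω ∈ {ω' | X ω' = X ω} from rfl)]
    _ = ∑ a ∈ S, f a * w a := by
        rw [integral_finsetSum S fun a ha => (integrable_const (f a)).indicator₀ (hfiber a ha)]
        refine sum_congr rfl fun a ha => ?_
        rw [integral_indicator₀ (hfiber a ha), setIntegral_const, measureReal_def, hX,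
          ENNReal.toReal_ofReal (hw0 a), smul_eq_mul, mul_comm]

end FiniteLaw

section MultinomialLaw

variable {Ω V : Type*} [MeasurableSpace Ω] {μ : Measure Ω} [IsProbabilityMeasure μ]
  [Fintype V] [DecidableEq V]

theorem integral_sum_coord_of_multinomial {n : ℕ} {p : V → ℝ} (hp0 : ∀ i, 0 ≤ p i)
    (hp1 : ∑ i, p i = 1) {X : Ω → V → ℕ}
    (hX : ∀ c, μ {ω | X ω = c} = ENNReal.ofReal (multinomialProb n p c)) (s : Finset V) :
    ∫ ω, ∑ i ∈ s, (X ω i : ℝ) ∂μ = ∑ i ∈ s, n * p i := by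
  have hout : ∀ c ∉ piAntidiag univ n, multinomialProb n p c = 0 := fun c hc =>
    if_neg fun h => hc (mem_piAntidiag.2 ⟨h, fun j _ => mem_univ j⟩)
  refine (integral_comp_eq_sum_of_measure_fiber (multinomialProb_nonneg hp0 n) hout
    (sum_multinomialProb hp1 n) hX fun c => ∑ i ∈ s, (c i : ℝ)).trans ?_
  simp_rw [sum_mul]
  rw [sum_comm]
  exact sum_congr rfl fun i _ => sum_coord_mul_multinomialProb hp1 n i

end MultinomialLaw

section ThreeMajority

variable {V : Type*} [Fintype V]

theorem pvec_eq {n : ℕ} (c : V → ℕ) (i : V) :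
    pvec n c i = (c i : ℝ) / n * (1 + (c i : ℝ) / n - (∑ j, (c j : ℝ) ^ 2) / (n : ℝ) ^ 2) := by
  simp only [pvec, sum_div, div_pow]

theorem sum_div_eq_one {n : ℕ} (hn : 0 < n) {c : V → ℕ} (hc : ∑ j, c j = n) :
    ∑ j, (c j : ℝ) / n = 1 := by
  rw [← sum_div, div_eq_one_iff_eq (by positivity)]
  exact_mod_cast hc

theorem pvec_nonneg {n : ℕ} (hn : 0 < n) {c : V → ℕ} (hc : ∑ j, c j = n) (i : V) :
    0 ≤ pvec n c i := by
  have hsq : ∑ j, ((c j : ℝ) / n) ^ 2 ≤ 1 := by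
    simpa [sum_div_eq_one hn hc] using
      sum_sq_le_sq_sum_of_nonneg (s := univ) (f := fun j => (c j : ℝ) / n) fun j _ => by positivity
  have hci : 0 ≤ (c i : ℝ) / n := by positivity
  exact mul_nonneg hci (by linarith)

theorem sum_pvec {n : ℕ} (hn : 0 < n) {c : V → ℕ} (hc : ∑ j, c j = n) :
    ∑ i, pvec n c i = 1 := by
  set x : V → ℝ := fun j => (c j : ℝ) / n
  have hexpand : ∀ i, pvec n c i = x i + x i ^ 2 - x i * ∑ j, x j ^ 2 := fun i => by
    simp only [pvec, x]; ring
  simp only [hexpand]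
  rw [sum_sub_distrib, sum_add_distrib, ← sum_mul, sum_div_eq_one hn hc]
  ring

variable [DecidableEq V]

theorem sq_sub_le_card_mul_sum_sq {n : ℕ} {c : V → ℕ} (hc : ∑ j, c j = n) {𝒞 : Finset V}
    {θ : ℝ} (hθn : θ ≤ n) (hout : ∑ j ∈ 𝒞ᶜ, (c j : ℝ) ≤ θ) :
    ((n : ℝ) - θ) ^ 2 ≤ 𝒞.card * ∑ j, (c j : ℝ) ^ 2 := by
  have hvalid : (n : ℝ) - θ ≤ ∑ j ∈ 𝒞, (c j : ℝ) := by
    have := sum_add_sum_compl 𝒞 fun j => (c j : ℝ)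
    push_cast [← hc]
    linarith
  calc ((n : ℝ) - θ) ^ 2 ≤ (∑ j ∈ 𝒞, (c j : ℝ)) ^ 2 := by gcongr
    _ ≤ 𝒞.card * ∑ j ∈ 𝒞, (c j : ℝ) ^ 2 := sq_sum_le_card_mul_sum_sq
    _ ≤ 𝒞.card * ∑ j, (c j : ℝ) ^ 2 := mul_le_mul_of_nonneg_left
      (sum_le_sum_of_subset_of_nonneg (subset_univ 𝒞) fun j _ _ => sq_nonneg _) (by positivity)

theorem mul_pvec_le {n : ℕ} (hn : 0 < n) {c : V → ℕ} (hc : ∑ j, c j = n) {𝒞 : Finset V}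
    (h𝒞 : 0 < 𝒞.card) {θ : ℝ} (hθ0 : 0 ≤ θ) (hθn : 2 * (𝒞.card + 2) * θ ≤ n)
    (hout : ∑ j ∈ 𝒞ᶜ, (c j : ℝ) ≤ θ) {i : V} (hi : (c i : ℝ) ≤ θ) :
    n * pvec n c i ≤ c i * (1 - 1 / (2 * 𝒞.card)) := by
  set k : ℝ := ((𝒞.card : ℕ) : ℝ)
  set Q : ℝ := ∑ j, (c j : ℝ) ^ 2
  have hnR : (0 : ℝ) < n := by exact_mod_cast hn
  have hk : (0 : ℝ) < k := Nat.cast_pos.2 h𝒞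
  have hCS : ((n : ℝ) - θ) ^ 2 ≤ k * Q :=
    sq_sub_le_card_mul_sum_sq hc (by nlinarith) hout
  have hdrift : (c i : ℝ) / n + 1 / (2 * k) ≤ Q / (n : ℝ) ^ 2 := by
    rw [div_add_div _ _ hnR.ne' (by positivity), div_le_div_iff₀ (by positivity) (by positivity)]
    nlinarith [sq_nonneg θ, mul_le_mul_of_nonneg_right hi (by positivity : (0 : ℝ) ≤ 2 * k * n),
      mul_le_mul_of_nonneg_right hθn hnR.le]
  calc n * pvec n c i = c i * (1 + (c i : ℝ) / n - Q / (n : ℝ) ^ 2) := by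
        rw [pvec_eq]; field_simp; rfl
    _ ≤ c i * (1 - 1 / (2 * k)) := mul_le_mul_of_nonneg_left (by linarith) (Nat.cast_nonneg _)

theorem smallThr_nonneg {γ : ℝ} (hγ : 0 ≤ γ) (n k : ℕ) : 0 ≤ smallThr γ n k := by
  have := Real.log_natCast_nonneg n
  unfold smallThr
  positivity

theorem mul_smallThr_le {γ : ℝ} (hγ : 0 < γ) {n k : ℕ} (hk : 2 ≤ k)
    (hlog : 4 * γ ≤ Real.log n) : 2 * ((k : ℝ) + 2) * smallThr γ n k ≤ n := by
  have hkR : (2 : ℝ) ≤ k := by exact_mod_cast hk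
  have hk32 : (k : ℝ) ≤ (k : ℝ) ^ ((3 : ℝ) / 2) := by
    simpa using Real.rpow_le_rpow_of_exponent_le (by linarith) (by norm_num : (1 : ℝ) ≤ 3 / 2)
  have hthr : smallThr γ n k ≤ √n / (4 * k) := by
    calc smallThr γ n k ≤ γ * √n / (k * (4 * γ)) := by unfold smallThr; gcongr
      _ = √n / (4 * k) := by field_simp
  have hsqrt : √(n : ℝ) ≤ n := Real.sqrt_le_iff.2 ⟨by positivity, by
    exact_mod_cast Nat.le_self_pow two_ne_zero n⟩
  calc 2 * ((k : ℝ) + 2) * smallThr γ n k ≤ 2 * ((k : ℝ) + 2) * (√n / (4 * k)) := by gcongr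
    _ ≤ √n := by
      rw [mul_div_assoc', div_le_iff₀ (by positivity)]
      nlinarith [Real.sqrt_nonneg n]
    _ ≤ n := hsqrt

end ThreeMajority

/-- (Expectation bounds in Lemma `le:hyp-H`.) If `k ≤ n^α` (α < 1) and the
non-valid mass of `ctil` is at most the smallness threshold, then for all sufficiently large
`n`: every small opinion has `E[C_i'] ≤ c̃_i (1 - 1/(2k))` after one round of 3-majority
dynamics, and the expected non-valid mass satisfies `E[∑_{i∉𝒞} C_i'] ≤ thr · (1 - 1/(2k))`. -/
theorem stmt12 :
    ∀ γ α : ℝ, 0 < γ → α < 1 →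
    ∃ N : ℕ, ∀ n : ℕ, N ≤ n →
    ∀ (V : Type) [Fintype V] [DecidableEq V] (Ω : Type) [MeasurableSpace Ω]
      (P : Measure Ω), IsProbabilityMeasure P →
    ∀ (k : ℕ) (𝒞 : Finset V) (ctil : V → ℕ) (C' : Ω → V → ℕ),
      k = 𝒞.card → 2 ≤ k →
      (k : ℝ) ≤ (n : ℝ) ^ α →
      (∑ i, ctil i = n) →
      (∑ i ∈ 𝒞ᶜ, (ctil i : ℝ)) ≤ smallThr γ n k →
      (∀ c' : V → ℕ,
        P {ω | C' ω = c'} = ENNReal.ofReal (multinomialProb n (pvec n ctil) c')) →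
      (∀ i : V, (ctil i : ℝ) ≤ smallThr γ n k →
        ∫ ω, (C' ω i : ℝ) ∂P ≤ (ctil i : ℝ) * (1 - 1 / (2 * (k : ℝ)))) ∧
      (∫ ω, (∑ i ∈ 𝒞ᶜ, (C' ω i : ℝ)) ∂P ≤ smallThr γ n k * (1 - 1 / (2 * (k : ℝ)))) := by
  intro γ α hγ _
  refine ⟨⌈Real.exp (4 * γ)⌉₊, fun n hN V _ _ Ω _ P _ k 𝒞 ctil C' hk hk2 _ hsum hout hC' => ?_⟩
  have hexp : Real.exp (4 * γ) ≤ n := (Nat.le_ceil _).trans (by exact_mod_cast hN)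
  have hn : 0 < n := by exact_mod_cast (Real.exp_pos _).trans_le hexp
  set θ := smallThr γ n k
  have hθn := mul_smallThr_le hγ hk2 ((Real.le_log_iff_exp_le (by positivity)).2 hexp)
  have hmean : ∀ s : Finset V, ∫ ω, ∑ i ∈ s, (C' ω i : ℝ) ∂P = ∑ i ∈ s, n * pvec n ctil i :=
    integral_sum_coord_of_multinomial (pvec_nonneg hn hsum) (sum_pvec hn hsum) hC'
  have hcoord : ∀ i, ∫ ω, (C' ω i : ℝ) ∂P = n * pvec n ctil i := fun i => by
    simpa using hmean {i}
  subst hk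
  have hsmall : ∀ i, (ctil i : ℝ) ≤ θ → n * pvec n ctil i ≤ ctil i * (1 - 1 / (2 * 𝒞.card)) :=
    fun i => mul_pvec_le hn hsum (by omega) (smallThr_nonneg hγ.le n _) hθn hout
  refine ⟨fun i hi => (hcoord i).trans_le (hsmall i hi), ?_⟩
  have hfactor : (0 : ℝ) ≤ 1 - 1 / (2 * 𝒞.card) := by
    rw [sub_nonneg, div_le_one (by positivity)]
    exact_mod_cast (by omega : 1 ≤ 2 * 𝒞.card)
  calc ∫ ω, ∑ i ∈ 𝒞ᶜ, (C' ω i : ℝ) ∂P = ∑ i ∈ 𝒞ᶜ, n * pvec n ctil i := hmean 𝒞ᶜ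
    _ ≤ ∑ i ∈ 𝒞ᶜ, (ctil i : ℝ) * (1 - 1 / (2 * (𝒞.card : ℝ))) := sum_le_sum fun i hi =>
        hsmall i ((single_le_sum (fun j _ => (ctil j).cast_nonneg) hi).trans hout)
    _ = (∑ i ∈ 𝒞ᶜ, (ctil i : ℝ)) * (1 - 1 / (2 * 𝒞.card)) := (sum_mul _ _ _).symm
    _ ≤ θ * (1 - 1 / (2 * 𝒞.card)) := mul_le_mul_of_nonneg_right hout hfactor
end
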